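/- arXiv:1701.08883 — 2 statements merged into one kernel-verified Lean document; each statement's English description precedes it below -/
import Mathlib

section
/- The maximum value of h(p)/(1+p) over p in [0,1] equals log2(phi), where phi = (1+sqrt(5))/2 is the golden ratio (approximately 0.6942 bits). -/
noncomputable def binEnt (p : ℝ) : ℝ := -p * Real.logb 2 p - (1 - p) * Real.logb 2 (1 - p)

lemma sqrt5_facts : Real.sqrt 5 ^ 2 = 5 ∧ 1 < Real.sqrt 5 ∧ Real.sqrt 5 < 3 := by
  have hs5 : Real.sqrt 5 ^ 2 = 5 := Real.sq_sqrt (by norm_num)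
  have hs5n : (0:ℝ) ≤ Real.sqrt 5 := Real.sqrt_nonneg 5
  exact ⟨hs5, by nlinarith, by nlinarith⟩

lemma key_ineq (p : ℝ) (hp : p ∈ Set.Icc (0:ℝ) 1) :
    -p * Real.log p - (1 - p) * Real.log (1 - p)
      ≤ (1 + p) * Real.log ((1 + Real.sqrt 5) / 2) := by
  obtain ⟨hs5, hs1, hs3⟩ := sqrt5_facts
  set q : ℝ := (Real.sqrt 5 - 1) / 2 with hqdef
  have hq0 : 0 < q := by simp only [hqdef]; linarith
  have hq1 : q < 1 := by simp only [hqdef]; linarith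
  have hq2 : q ^ 2 + q = 1 := by simp only [hqdef]; linear_combination hs5 / 4
  have hmul : q * ((1 + Real.sqrt 5) / 2) = 1 := by
    simp only [hqdef]; linear_combination hs5 / 4
  have hφinv : (1 + Real.sqrt 5) / 2 = q⁻¹ :=
    eq_inv_of_mul_eq_one_left (by linear_combination hmul)
  clear_value q
  have hlogφ : Real.log ((1 + Real.sqrt 5) / 2) = -Real.log q := by
    rw [hφinv, Real.log_inv]
  have hlogq : Real.log q < 0 := Real.log_neg hq0 hq1
  rcases eq_or_lt_of_le hp.1 with h0 | h0
  · simp only [← h0]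
    simp [Real.log_one]
    nlinarith
  rcases eq_or_lt_of_le hp.2 with h1 | h1
  · simp only [h1]
    simp [Real.log_one]
    nlinarith
  have hp1 : 0 < 1 - p := by linarith
  have hA : p * (2 * Real.log q - Real.log p) ≤ q ^ 2 - p := by
    have hpos : 0 < q ^ 2 / p := by positivity
    have h := Real.log_le_sub_one_of_pos hpos
    rw [Real.log_div (by positivity) h0.ne', Real.log_pow] at h
    push_cast at h
    have h' := mul_le_mul_of_nonneg_left h h0.le
    calc p * (2 * Real.log q - Real.log p) ≤ p * (q ^ 2 / p - 1) := by linarith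
      _ = q ^ 2 - p := by field_simp
  have hB : (1 - p) * (Real.log q - Real.log (1 - p)) ≤ q - (1 - p) := by
    have hpos : 0 < q / (1 - p) := by positivity
    have h := Real.log_le_sub_one_of_pos hpos
    rw [Real.log_div hq0.ne' hp1.ne'] at h
    have h' := mul_le_mul_of_nonneg_left h hp1.le
    calc (1 - p) * (Real.log q - Real.log (1 - p)) ≤ (1 - p) * (q / (1 - p) - 1) := by linarith
      _ = q - (1 - p) := by field_simp
  rw [hlogφ]
  nlinarith [hA, hB]

/-- The maximum value of `h(p)/(1+p)` over `p ∈ [0,1]` equals `log₂ φ` with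
`φ = (1+√5)/2` the golden ratio. -/
theorem stmt_1 :
    IsGreatest ((fun p : ℝ => binEnt p / (1 + p)) '' Set.Icc 0 1)
      (Real.logb 2 ((1 + Real.sqrt 5) / 2)) := by
  obtain ⟨hs5, hs1, hs3⟩ := sqrt5_facts
  set q : ℝ := (Real.sqrt 5 - 1) / 2 with hqdef
  have hq0 : 0 < q := by simp only [hqdef]; linarith
  have hq1 : q < 1 := by simp only [hqdef]; linarith
  have hq2 : q ^ 2 + q = 1 := by simp only [hqdef]; linear_combination hs5 / 4
  have hmul : q * ((1 + Real.sqrt 5) / 2) = 1 := by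
    simp only [hqdef]; linear_combination hs5 / 4
  have hφinv : (1 + Real.sqrt 5) / 2 = q⁻¹ :=
    eq_inv_of_mul_eq_one_left (by linear_combination hmul)
  clear_value q
  constructor
  · refine ⟨q ^ 2, ⟨by positivity, by nlinarith⟩, ?_⟩
    have h1q2 : 1 - q ^ 2 = q := by linarith
    have hne : (1:ℝ) + q ^ 2 ≠ 0 := by nlinarith
    have hlogφ : Real.logb 2 ((1 + Real.sqrt 5) / 2) = -Real.logb 2 q := by
      rw [hφinv, Real.logb_inv]
    simp only [binEnt, h1q2, hlogφ, Real.logb_pow]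
    rw [div_eq_iff hne]
    push_cast
    linear_combination (-(Real.logb 2 q)) * hq2
  · rintro y ⟨p, hp, rfl⟩
    have hlog2 : 0 < Real.log 2 := Real.log_pos (by norm_num)
    have h1p : 0 < 1 + p := by linarith [hp.1]
    have hE : binEnt p = (-p * Real.log p - (1 - p) * Real.log (1 - p)) / Real.log 2 := by
      simp only [binEnt, Real.logb]; ring
    have key := key_ineq p hp
    simp only [hE, Real.logb]
    rw [div_div, div_le_div_iff₀ (by positivity) hlog2]
    nlinarith [mul_le_mul_of_nonneg_right key hlog2.le]
end

section
/- The noisy covert queueing channel capacity C(delta) = max_{0<=p<=1} [h((1-delta)p) - p*h(delta)] / [(1-p) + delta*p + 2*(1-delta)*p] is a continuous function of delta on [0,1], equals log2((1+sqrt(5))/2) at delta = 0, and equals 0 at delta = 1. -/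
/-- Noisy covert queueing channel capacity as a function of the drop probability. -/
noncomputable def Cnoisy (δ : ℝ) : ℝ :=
  sSup ((fun p : ℝ =>
    (binEnt ((1 - δ) * p) - p * binEnt δ) / ((1 - p) + δ * p + 2 * (1 - δ) * p)) ''
      Set.Icc 0 1)

lemma binEnt_eq (p : ℝ) :
    binEnt p = (Real.negMulLog p + Real.negMulLog (1 - p)) / Real.log 2 := by
  unfold binEnt Real.logb Real.negMulLog
  ring

lemma binEnt_cont : Continuous binEnt := by
  have : binEnt = fun p => (Real.negMulLog p + Real.negMulLog (1 - p)) / Real.log 2 :=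
    funext binEnt_eq
  rw [this]
  exact (Real.continuous_negMulLog.add
    (Real.continuous_negMulLog.comp (continuous_const.sub continuous_id))).div_const _

lemma binEnt_zero : binEnt 0 = 0 := by
  simp [binEnt]

lemma binEnt_one : binEnt 1 = 0 := by
  simp [binEnt]

/-- the function inside the sup, jointly in `(δ, p)` -/
noncomputable def Gfun (q : ℝ × ℝ) : ℝ :=
  (binEnt ((1 - q.1) * q.2) - q.2 * binEnt q.1) /
    ((1 - q.2) + q.1 * q.2 + 2 * (1 - q.1) * q.2)

lemma Gfun_contOn :
    ContinuousOn Gfun (Set.Icc (0:ℝ) 1 ×ˢ Set.Icc (0:ℝ) 1) := by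
  have hnum : Continuous fun q : ℝ × ℝ => binEnt ((1 - q.1) * q.2) - q.2 * binEnt q.1 := by
    apply Continuous.sub
    · exact binEnt_cont.comp (by continuity)
    · exact continuous_snd.mul (binEnt_cont.comp continuous_fst)
  have hden : Continuous fun q : ℝ × ℝ =>
      (1 - q.2) + q.1 * q.2 + 2 * (1 - q.1) * q.2 := by continuity
  apply ContinuousOn.div hnum.continuousOn hden.continuousOn
  · rintro ⟨a, b⟩ ⟨⟨ha0, ha1⟩, ⟨hb0, hb1⟩⟩
    simp only
    nlinarith

lemma denom_pos {a b : ℝ} (ha1 : a ≤ 1) (hb0 : 0 ≤ b) :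
    0 < (1 - b) + a * b + 2 * (1 - a) * b := by nlinarith

/-- boundedness of each slice -/
lemma slice_bddAbove (δ : ℝ) (hδ : δ ∈ Set.Icc (0:ℝ) 1) :
    BddAbove ((fun p : ℝ =>
      (binEnt ((1 - δ) * p) - p * binEnt δ) / ((1 - p) + δ * p + 2 * (1 - δ) * p)) ''
        Set.Icc 0 1) := by
  have hc : ContinuousOn (fun p : ℝ =>
      (binEnt ((1 - δ) * p) - p * binEnt δ) / ((1 - p) + δ * p + 2 * (1 - δ) * p))
      (Set.Icc 0 1) := by
    have : (fun p : ℝ =>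
        (binEnt ((1 - δ) * p) - p * binEnt δ) / ((1 - p) + δ * p + 2 * (1 - δ) * p)) =
        fun p => Gfun (δ, p) := rfl
    rw [this]
    exact Gfun_contOn.comp (Continuous.prodMk_right δ).continuousOn
      (fun p hp => ⟨hδ, hp⟩)
  exact (isCompact_Icc.image_of_continuousOn hc).bddAbove

lemma sqrt5_sq : Real.sqrt 5 ^ 2 = 5 := Real.sq_sqrt (by norm_num)

lemma sqrt5_lt : Real.sqrt 5 < 3 := by
  nlinarith [sqrt5_sq, Real.sqrt_nonneg 5]

lemma sqrt5_gt : 1 < Real.sqrt 5 := by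
  nlinarith [sqrt5_sq, Real.sqrt_nonneg 5]

lemma phi_gt_one : 1 < (1 + Real.sqrt 5) / 2 := by
  nlinarith [sqrt5_gt]

lemma log_p0 : Real.log ((3 - Real.sqrt 5) / 2) = -(2 * Real.log ((1 + Real.sqrt 5) / 2)) := by
  have h : (3 - Real.sqrt 5) / 2 = (((1 + Real.sqrt 5) / 2) ^ 2)⁻¹ := by
    apply eq_inv_of_mul_eq_one_left
    nlinarith [sqrt5_sq]
  rw [h, Real.log_inv, Real.log_pow]
  push_cast
  ring

lemma log_q0 : Real.log ((Real.sqrt 5 - 1) / 2) = -Real.log ((1 + Real.sqrt 5) / 2) := by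
  have h : (Real.sqrt 5 - 1) / 2 = ((1 + Real.sqrt 5) / 2)⁻¹ := by
    apply eq_inv_of_mul_eq_one_left
    nlinarith [sqrt5_sq]
  rw [h, Real.log_inv]

/-- Gibbs-type upper bound: `h(p) ≤ (1+p) log₂ φ`. -/
lemma binEnt_le (p : ℝ) (hp : p ∈ Set.Icc (0:ℝ) 1) :
    binEnt p ≤ (1 + p) * Real.logb 2 ((1 + Real.sqrt 5) / 2) := by
  obtain ⟨hp0, hp1⟩ := hp
  set φ := (1 + Real.sqrt 5) / 2 with hφdef
  have hlogφ : 0 ≤ Real.log φ := Real.log_nonneg (le_of_lt phi_gt_one)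
  have hlog2 : 0 < Real.log 2 := Real.log_pos (by norm_num)
  have hlogb : Real.logb 2 φ = Real.log φ / Real.log 2 := rfl
  rcases eq_or_lt_of_le hp0 with h0 | h0
  · rw [← h0, binEnt_zero, hlogb]
    positivity
  rcases eq_or_lt_of_le hp1 with h1 | h1
  · rw [h1, binEnt_one, hlogb]
    positivity
  -- interior case
  have hq1 : (0:ℝ) < (3 - Real.sqrt 5) / 2 := by nlinarith [sqrt5_lt]
  have hq0 : (0:ℝ) < (Real.sqrt 5 - 1) / 2 := by nlinarith [sqrt5_gt]
  have h1p : 0 < 1 - p := by linarith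
  have key1 : Real.log ((3 - Real.sqrt 5) / 2 / p) ≤ (3 - Real.sqrt 5) / 2 / p - 1 :=
    Real.log_le_sub_one_of_pos (by positivity)
  have key2 : Real.log ((Real.sqrt 5 - 1) / 2 / (1 - p)) ≤ (Real.sqrt 5 - 1) / 2 / (1 - p) - 1 :=
    Real.log_le_sub_one_of_pos (by positivity)
  rw [Real.log_div (ne_of_gt hq1) (ne_of_gt h0), log_p0] at key1
  rw [Real.log_div (ne_of_gt hq0) (ne_of_gt h1p), log_q0] at key2
  -- multiply key1 by p and key2 by (1-p) and sum
  have k1 : p * (-(2 * Real.log φ) - Real.log p) ≤ (3 - Real.sqrt 5) / 2 - p := by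
    have := mul_le_mul_of_nonneg_left key1 (le_of_lt h0)
    calc p * (-(2 * Real.log φ) - Real.log p) ≤ p * ((3 - Real.sqrt 5) / 2 / p - 1) := this
      _ = (3 - Real.sqrt 5) / 2 - p := by field_simp
  have k2 : (1 - p) * (-Real.log φ - Real.log (1 - p)) ≤ (Real.sqrt 5 - 1) / 2 - (1 - p) := by
    have := mul_le_mul_of_nonneg_left key2 (le_of_lt h1p)
    calc (1 - p) * (-Real.log φ - Real.log (1 - p))
        ≤ (1 - p) * ((Real.sqrt 5 - 1) / 2 / (1 - p) - 1) := this
      _ = (Real.sqrt 5 - 1) / 2 - (1 - p) := by field_simp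
  have hsum : -p * Real.log p - (1 - p) * Real.log (1 - p) ≤ (1 + p) * Real.log φ := by
    nlinarith [k1, k2]
  have : binEnt p = (-p * Real.log p - (1 - p) * Real.log (1 - p)) / Real.log 2 := by
    unfold binEnt Real.logb
    ring
  rw [this, hlogb]
  rw [div_le_iff₀ hlog2]
  calc -p * Real.log p - (1 - p) * Real.log (1 - p) ≤ (1 + p) * Real.log φ := hsum
    _ = (1 + p) * (Real.log φ / Real.log 2) * Real.log 2 := by field_simp

/-- equality at `p₀ = (3 - √5)/2` -/
lemma binEnt_p0 : binEnt ((3 - Real.sqrt 5) / 2) =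
    (1 + (3 - Real.sqrt 5) / 2) * Real.logb 2 ((1 + Real.sqrt 5) / 2) := by
  have h1 : (1:ℝ) - (3 - Real.sqrt 5) / 2 = (Real.sqrt 5 - 1) / 2 := by ring
  unfold binEnt Real.logb
  rw [h1, log_p0, log_q0]
  ring

/-- `C(δ)` is continuous on `[0,1]`, equals `log₂((1+√5)/2)` at `δ = 0`, and
equals `0` at `δ = 1`. -/
theorem stmt_7 :
    ContinuousOn Cnoisy (Set.Icc 0 1) ∧
      Cnoisy 0 = Real.logb 2 ((1 + Real.sqrt 5) / 2) ∧ Cnoisy 1 = 0 := by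
  refine ⟨?_, ?_, ?_⟩
  · -- continuity
    have hK : IsCompact (Set.Icc (0:ℝ) 1 ×ˢ Set.Icc (0:ℝ) 1) :=
      isCompact_Icc.prod isCompact_Icc
    have hUC := hK.uniformContinuousOn_of_continuous Gfun_contOn
    rw [Metric.uniformContinuousOn_iff] at hUC
    rw [Metric.continuousOn_iff]
    intro δ₀ hδ₀ ε hε
    obtain ⟨d, hd, hUC⟩ := hUC (ε / 2) (by linarith)
    refine ⟨d, hd, fun δ hδ hdist => ?_⟩
    have hne : (Set.Icc (0:ℝ) 1).Nonempty := ⟨0, by norm_num⟩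
    -- pointwise closeness
    have hpt : ∀ p ∈ Set.Icc (0:ℝ) 1, |Gfun (δ, p) - Gfun (δ₀, p)| < ε / 2 := by
      intro p hp
      have := hUC (δ, p) ⟨hδ, hp⟩ (δ₀, p) ⟨hδ₀, hp⟩ (by
        rw [Prod.dist_eq]
        simp only [dist_self]
        rw [max_eq_left dist_nonneg]
        exact hdist)
      rwa [Real.dist_eq] at this
    have hb1 := slice_bddAbove δ hδ
    have hb2 := slice_bddAbove δ₀ hδ₀
    have key : ∀ (a b : ℝ), a ∈ Set.Icc (0:ℝ) 1 → b ∈ Set.Icc (0:ℝ) 1 →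
        (∀ p ∈ Set.Icc (0:ℝ) 1, |Gfun (a, p) - Gfun (b, p)| < ε / 2) →
        BddAbove ((fun p : ℝ =>
          (binEnt ((1 - b) * p) - p * binEnt b) / ((1 - p) + b * p + 2 * (1 - b) * p)) ''
            Set.Icc 0 1) →
        Cnoisy a ≤ Cnoisy b + ε / 2 := by
      intro a b _ _ hptab hbb
      unfold Cnoisy
      apply csSup_le (hne.image _)
      rintro x ⟨p, hp, rfl⟩
      have h1 : (binEnt ((1 - a) * p) - p * binEnt a) /
          ((1 - p) + a * p + 2 * (1 - a) * p) = Gfun (a, p) := rfl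
      have h2 : Gfun (a, p) ≤ Gfun (b, p) + ε / 2 := by
        have := hptab p hp
        have := abs_lt.mp this
        linarith [this.1, this.2]
      show Gfun (a, p) ≤ _
      refine h2.trans (add_le_add ?_ le_rfl)
      exact le_csSup hbb ⟨p, hp, rfl⟩
    have l1 : Cnoisy δ ≤ Cnoisy δ₀ + ε / 2 := key δ δ₀ hδ hδ₀ hpt hb2
    have l2 : Cnoisy δ₀ ≤ Cnoisy δ + ε / 2 := by
      apply key δ₀ δ hδ₀ hδ _ hb1
      intro p hp
      rw [abs_sub_comm]
      exact hpt p hp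
    rw [Real.dist_eq, abs_lt]
    constructor <;> linarith
  · -- value at 0
    unfold Cnoisy
    apply IsGreatest.csSup_eq
    constructor
    · refine ⟨(3 - Real.sqrt 5) / 2, ⟨by nlinarith [sqrt5_lt], by nlinarith [sqrt5_gt]⟩, ?_⟩
      show (binEnt ((1 - 0) * ((3 - Real.sqrt 5) / 2)) - (3 - Real.sqrt 5) / 2 * binEnt 0) /
        ((1 - (3 - Real.sqrt 5) / 2) + 0 * ((3 - Real.sqrt 5) / 2) +
          2 * (1 - 0) * ((3 - Real.sqrt 5) / 2)) = _
      have e1 : (1 - (0:ℝ)) * ((3 - Real.sqrt 5) / 2) = (3 - Real.sqrt 5) / 2 := by ring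
      rw [e1, binEnt_zero, binEnt_p0]
      have e2 : binEnt ((3 - Real.sqrt 5) / 2) = binEnt ((3 - Real.sqrt 5) / 2) := rfl
      have hpos : (0:ℝ) < 1 + (3 - Real.sqrt 5) / 2 := by nlinarith [sqrt5_lt]
      have e3 : (1 - (3 - Real.sqrt 5) / 2) + 0 * ((3 - Real.sqrt 5) / 2) +
          2 * (1 - 0) * ((3 - Real.sqrt 5) / 2) = 1 + (3 - Real.sqrt 5) / 2 := by ring
      rw [e3]
      rw [mul_zero, sub_zero, mul_comm, mul_div_assoc, div_self (ne_of_gt hpos), mul_one]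
    · rintro x ⟨p, hp, rfl⟩
      show (binEnt ((1 - 0) * p) - p * binEnt 0) /
        ((1 - p) + 0 * p + 2 * (1 - 0) * p) ≤ _
      have e1 : (1 - (0:ℝ)) * p = p := by ring
      have e3 : (1 - p) + 0 * p + 2 * (1 - 0) * p = 1 + p := by ring
      rw [e1, binEnt_zero, e3, mul_zero, sub_zero]
      have hpos : (0:ℝ) < 1 + p := by linarith [hp.1]
      rw [div_le_iff₀ hpos]
      calc binEnt p ≤ (1 + p) * Real.logb 2 ((1 + Real.sqrt 5) / 2) := binEnt_le p hp
        _ = Real.logb 2 ((1 + Real.sqrt 5) / 2) * (1 + p) := by ring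
  · -- value at 1
    unfold Cnoisy
    have : ∀ p ∈ Set.Icc (0:ℝ) 1,
        (binEnt ((1 - 1) * p) - p * binEnt 1) / ((1 - p) + 1 * p + 2 * (1 - 1) * p) = 0 := by
      intro p _
      simp [binEnt_zero, binEnt_one]
    rw [Set.image_congr this]
    rw [Set.Nonempty.image_const ⟨0, by norm_num⟩]
    exact csSup_singleton 0
end
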